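/- For a non-negative complex symplectic transformation R with R + I invertible, the quadratic form X ↦ Re(σ(X, SX)) on ℝ^{2n} is non-positive, where S = -i(R - I)(R + I)^{-1}. -/

import Mathlib

/-! Write `X = RY + Y` with `Y = (R + I)⁻¹X`, so that `SX = -i(RY - Y)`. Since `X` is real,
`conj(RY) + conj(Y) = RY + Y`, and bilinearity and antisymmetry of `σ` turn
`2 Re σ(X, SX) = σ(X, SX) + conj σ(X, SX)` into `-2 Re (i(σ(conj(RY), RY) - σ(conj Y, Y)))`,
which is `≤ 0` by non-negativity of `R`. -/

open Matrix
open scoped ComplexOrder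

/-- The standard symplectic matrix `[[0, Iₙ], [-Iₙ, 0]]`. -/
noncomputable def sympMat (n : ℕ) : Matrix (Fin n ⊕ Fin n) (Fin n ⊕ Fin n) ℂ :=
  Matrix.fromBlocks 0 1 (-1) 0

/-- The standard symplectic bilinear form `σ((x,ξ),(y,η)) = ⟨ξ,y⟩ - ⟨x,η⟩` on `ℂ^{2n}`. -/
noncomputable def sympForm (n : ℕ) (X Y : Fin n ⊕ Fin n → ℂ) : ℂ :=
  (sympMat n *ᵥ X) ⬝ᵥ Y

lemma Matrix.cayley_mulVec_add_one_mulVec {ι R : Type*} [Fintype ι] [DecidableEq ι] [CommRing R]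
    (A : Matrix ι ι R) (hA : IsUnit (A + 1).det) (c : R) (v : ι → R) :
    (c • ((A - 1) * (A + 1)⁻¹)) *ᵥ ((A + 1) *ᵥ v) = c • (A *ᵥ v - v) := by
  rw [smul_mulVec, mulVec_mulVec, Matrix.mul_assoc, nonsing_inv_mul _ hA, Matrix.mul_one,
    sub_mulVec, one_mulVec]

section SympForm

variable {n : ℕ}

lemma sympMat_transpose : (sympMat n)ᵀ = -sympMat n := by
  rw [sympMat, fromBlocks_transpose, fromBlocks_neg]
  simp

lemma star_sympMat_apply (i j : Fin n ⊕ Fin n) : star (sympMat n i j) = sympMat n i j := by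
  rcases i with i | i <;> rcases j with j | j <;> simp [sympMat, one_apply, apply_ite]

lemma star_sympForm (u v : Fin n ⊕ Fin n → ℂ) :
    star (sympForm n u v) = sympForm n (star u) (star v) := by
  simp [sympForm, dotProduct, mulVec, star_mul', star_sympMat_apply, mul_comm]

lemma sympForm_comm (u v : Fin n ⊕ Fin n → ℂ) : sympForm n v u = -sympForm n u v := by
  rw [sympForm, sympForm, dotProduct_comm, dotProduct_mulVec, ← mulVec_transpose,
    sympMat_transpose, neg_mulVec, neg_dotProduct]

@[simp] lemma sympForm_self (u : Fin n ⊕ Fin n → ℂ) : sympForm n u u = 0 := by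
  linear_combination sympForm_comm u u / 2

@[simp] lemma sympForm_add_left (u v w : Fin n ⊕ Fin n → ℂ) :
    sympForm n (u + v) w = sympForm n u w + sympForm n v w := by
  simp [sympForm, mulVec_add, add_dotProduct]

@[simp] lemma sympForm_sub_left (u v w : Fin n ⊕ Fin n → ℂ) :
    sympForm n (u - v) w = sympForm n u w - sympForm n v w := by
  simp [sympForm, mulVec_sub, sub_dotProduct]

@[simp] lemma sympForm_sub_right (u v w : Fin n ⊕ Fin n → ℂ) :
    sympForm n u (v - w) = sympForm n u v - sympForm n u w := by
  simp [sympForm, dotProduct_sub]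

@[simp] lemma sympForm_smul_right (c : ℂ) (u v : Fin n ⊕ Fin n → ℂ) :
    sympForm n u (c • v) = c * sympForm n u v := by
  simp [sympForm, dotProduct_smul]

lemma sympForm_add_smul_sub_add_star {a b : Fin n ⊕ Fin n → ℂ} (hreal : star (a + b) = a + b) :
    sympForm n (a + b) (-Complex.I • (a - b)) + star (sympForm n (a + b) (-Complex.I • (a - b))) =
      -2 * (Complex.I * (sympForm n (star a) a - sympForm n (star b) b)) := by
  have hstar_a : star a = a + b - star b := by rw [← hreal, star_add]; abel
  rw [star_sympForm, hreal, star_smul, star_sub, hstar_a]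
  simp only [sympForm_add_left, sympForm_sub_left, sympForm_sub_right, sympForm_smul_right,
    sympForm_self, star_neg, Complex.star_def, Complex.conj_I]
  linear_combination Complex.I * sympForm_comm a b - 2 * Complex.I * sympForm_comm a (star b)
    - 2 * Complex.I * sympForm_comm b (star b)

lemma re_sympForm_add_smul_sub {a b : Fin n ⊕ Fin n → ℂ} (hreal : star (a + b) = a + b) :
    (sympForm n (a + b) (-Complex.I • (a - b))).re =
      -(Complex.I * (sympForm n (star a) a - sympForm n (star b) b)).re := by
  have h : ((sympForm n (a + b) (-Complex.I • (a - b))).re : ℂ) =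
      -(Complex.I * (sympForm n (star a) a - sympForm n (star b) b)) := by
    rw [Complex.re_eq_add_conj, ← Complex.star_def, sympForm_add_smul_sub_add_star hreal]
    ring
  rw [← Complex.neg_re, ← h, Complex.ofReal_re]

end SympForm

theorem cayley_quadratic_form_re_nonpos_general (n : ℕ)
    (R : Matrix (Fin n ⊕ Fin n) (Fin n ⊕ Fin n) ℂ)
    (hnonneg : ∀ X : Fin n ⊕ Fin n → ℂ,
      0 ≤ Complex.I * (sympForm n (star (R *ᵥ X)) (R *ᵥ X) - sympForm n (star X) X))
    (h : IsUnit (R + 1).det) :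
    ∀ X : Fin n ⊕ Fin n → ℝ,
      (sympForm n (fun i => (X i : ℂ))
        (((-Complex.I) • ((R - 1) * (R + 1)⁻¹)) *ᵥ fun i => (X i : ℂ))).re ≤ 0 := by
  intro X
  obtain ⟨Y, hY⟩ : ∃ Y : Fin n ⊕ Fin n → ℂ, (R + 1) *ᵥ Y = fun i => (X i : ℂ) :=
    ⟨(R + 1)⁻¹ *ᵥ fun i => (X i : ℂ), by rw [mulVec_mulVec, mul_nonsing_inv _ h, one_mulVec]⟩
  have hreal : star (R *ᵥ Y + Y) = R *ᵥ Y + Y := by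
    rw [show R *ᵥ Y + Y = (R + 1) *ᵥ Y by rw [add_mulVec, one_mulVec], hY]
    exact funext fun i => Complex.conj_ofReal (X i)
  rw [← hY, cayley_mulVec_add_one_mulVec R h, add_mulVec, one_mulVec,
    re_sympForm_add_smul_sub hreal, neg_nonpos]
  exact (Complex.nonneg_iff.1 (hnonneg Y)).1

/-- For a non-negative complex symplectic transformation `R` with `R + I` invertible, the
quadratic form `X ↦ Re σ(X, SX)` on `ℝ^{2n}` is non-positive, where
`S = -i(R - I)(R + I)⁻¹`. -/
theorem cayley_quadratic_form_re_nonpos (n : ℕ)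
    (R : Matrix (Fin n ⊕ Fin n) (Fin n ⊕ Fin n) ℂ)
    (hsymp : ∀ X Y : Fin n ⊕ Fin n → ℂ, sympForm n (R *ᵥ X) (R *ᵥ Y) = sympForm n X Y)
    (hnonneg : ∀ X : Fin n ⊕ Fin n → ℂ,
      0 ≤ Complex.I * (sympForm n (star (R *ᵥ X)) (R *ᵥ X) - sympForm n (star X) X))
    (h : IsUnit (R + 1).det) :
    ∀ X : Fin n ⊕ Fin n → ℝ,
      (sympForm n (fun i => (X i : ℂ))
        (((-Complex.I) • ((R - 1) * (R + 1)⁻¹)) *ᵥ fun i => (X i : ℂ))).re ≤ 0 :=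
  cayley_quadratic_form_re_nonpos_general n R hnonneg h
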